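/- arXiv:1702.06419 — 7 statements merged into one kernel-verified Lean document; each statement's English description precedes it below -/
import Mathlib

section
/- Let p be a prime and A ⊆ F_p. Then |A +̇ A| ≥ min{p, 2|A| - 3}, where A +̇ A = {a + b : a, b ∈ A, a ≠ b}. -/
/-!
Polynomial method of Alon, Nathanson and Ruzsa, with the coefficient extraction made explicit
through Lagrange weights `w_A(a) = ∏ a' ∈ A.erase a, (a - a')⁻¹`. For `#A = k + 2` and
`#B = l + 1`, the pairing `f ↦ ∑ a ∈ A, ∑ b ∈ B, w_A(a) w_B(b) f(a, b)` kills every monomial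
`a ^ i * b ^ j` with `i + j ≤ k + l + 1` except `a ^ (k + 1) * b ^ l`, which it sends to `1`.
If `A +̇ B` had at most `k + l` elements, a monic `g` of degree `k + l` would vanish on it, so
`(a - b) * g (a + b)` would vanish on `A × B`; but the pairing reads off its coefficient of
`a ^ (k + 1) * b ^ l`, namely `(k + l).choose k - (k + l).choose (k + 1)`, which is nonzero in
`ZMod p` when `l ≤ k` and `k + l < p`. Taking `B = A.erase a` gives the theorem.
-/

open Finset Polynomial Lagrange

section NodalPairing

variable {F : Type*} [Field F] [DecidableEq F]

theorem Lagrange.sum_nodalWeight_mul_pow {s : Finset F} {i : ℕ} (hi : i < #s) :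
    ∑ a ∈ s, nodalWeight s id a * a ^ i = if i = #s - 1 then 1 else 0 := by
  have h := coeff_eq_sum (s := s) (v := id) (Set.injOn_id _) (P := (X ^ i : F[X]))
    (by rw [degree_X_pow]; exact_mod_cast hi)
  rw [coeff_X_pow, eq_comm] at h
  simpa [nodalWeight, div_eq_mul_inv, mul_comm, prod_inv_distrib, @eq_comm _ (#s - 1)] using h

def nodalPairing (A B : Finset F) (f : F → F → F) : F :=
  ∑ a ∈ A, ∑ b ∈ B, nodalWeight A id a * nodalWeight B id b * f a b

variable {A B : Finset F}

theorem nodalPairing_sub (f g : F → F → F) :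
    nodalPairing A B (fun a b => f a b - g a b) = nodalPairing A B f - nodalPairing A B g := by
  simp only [nodalPairing, mul_sub, sum_sub_distrib]

theorem nodalPairing_sum_mul {ι : Type*} (s : Finset ι) (c : ι → F) (f : ι → F → F → F) :
    nodalPairing A B (fun a b => ∑ t ∈ s, c t * f t a b) =
      ∑ t ∈ s, c t * nodalPairing A B (f t) := by
  simp only [nodalPairing, mul_sum]
  conv_rhs => rw [sum_comm]
  refine sum_congr rfl fun a _ => ?_
  conv_rhs => rw [sum_comm]
  exact sum_congr rfl fun b _ => sum_congr rfl fun t _ => by ring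

theorem nodalPairing_pow_mul_pow {k l i j : ℕ} (hA : #A = k + 1) (hB : #B = l + 1)
    (hij : i + j ≤ k + l) :
    nodalPairing A B (fun a b => a ^ i * b ^ j) = if i = k ∧ j = l then 1 else 0 := by
  have hsplit : nodalPairing A B (fun a b => a ^ i * b ^ j) =
      (∑ a ∈ A, nodalWeight A id a * a ^ i) * ∑ b ∈ B, nodalWeight B id b * b ^ j := by
    simp only [nodalPairing, sum_mul_sum]
    exact sum_congr rfl fun a _ => sum_congr rfl fun b _ => by ring
  rw [hsplit]
  rcases lt_or_ge i (k + 1) with hi | hi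
  · rcases lt_or_ge j (l + 1) with hj | hj
    · rw [sum_nodalWeight_mul_pow (hA ▸ hi), sum_nodalWeight_mul_pow (hB ▸ hj), hA, hB,
        add_tsub_cancel_right, add_tsub_cancel_right, ite_zero_mul_ite_zero, mul_one]
    · rw [sum_nodalWeight_mul_pow (hA ▸ hi), hA, if_neg (by omega), zero_mul, if_neg (by omega)]
  · rw [sum_nodalWeight_mul_pow (s := B) (by omega), hB, if_neg (by omega), mul_zero,
      if_neg (by omega)]

theorem nodalPairing_sub_mul_add_pow {k l m : ℕ} (hA : #A = k + 2) (hB : #B = l + 1)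
    (hm : m ≤ k + l) :
    nodalPairing A B (fun a b => (a - b) * (a + b) ^ m) =
      if m = k + l then (m.choose k : F) - m.choose (k + 1) else 0 := by
  have hexpand : ∀ a b : F, (a - b) * (a + b) ^ m =
      (∑ t ∈ range (m + 1), (m.choose t : F) * (a ^ (t + 1) * b ^ (m - t))) -
        ∑ t ∈ range (m + 1), (m.choose t : F) * (a ^ t * b ^ (m - t + 1)) := by
    intro a b
    rw [add_pow, mul_sum, ← sum_sub_distrib]
    exact sum_congr rfl fun t _ => by ring
  simp_rw [hexpand]
  rw [nodalPairing_sub, nodalPairing_sum_mul, nodalPairing_sum_mul]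
  have hA' : #A = k + 1 + 1 := hA
  have hfirst : ∀ t ∈ range (m + 1),
      (m.choose t : F) * nodalPairing A B (fun a b => a ^ (t + 1) * b ^ (m - t)) =
        if t = k ∧ m = k + l then (m.choose t : F) else 0 := by
    intro t ht
    rw [mem_range] at ht
    rw [nodalPairing_pow_mul_pow hA' hB (by omega), mul_ite, mul_one, mul_zero]
    exact if_congr (by omega) rfl rfl
  have hsecond : ∀ t ∈ range (m + 1),
      (m.choose t : F) * nodalPairing A B (fun a b => a ^ t * b ^ (m - t + 1)) =
        if t = k + 1 ∧ m = k + l then (m.choose t : F) else 0 := by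
    intro t ht
    rw [mem_range] at ht
    rw [nodalPairing_pow_mul_pow hA' hB (by omega), mul_ite, mul_one, mul_zero]
    exact if_congr (by omega) rfl rfl
  rw [sum_congr rfl hfirst, sum_congr rfl hsecond]
  split_ifs with hmkl
  · simp only [hmkl, and_true, sum_ite_eq', mem_range]
    rw [if_pos (show k < k + l + 1 by omega)]
    split_ifs with hk
    · rfl
    · rw [Nat.choose_eq_zero_of_lt (show k + l < k + 1 by omega), Nat.cast_zero]
  · simp only [hmkl, and_false, if_false, sum_const_zero, sub_zero]

theorem nodalPairing_sub_mul_eval_add {k l : ℕ} (hA : #A = k + 2) (hB : #B = l + 1) {g : F[X]}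
    (hg : g.natDegree ≤ k + l) :
    nodalPairing A B (fun a b => (a - b) * g.eval (a + b)) =
      g.coeff (k + l) * ((k + l).choose k - (k + l).choose (k + 1)) := by
  have hexpand : ∀ a b : F, (a - b) * g.eval (a + b) =
      ∑ m ∈ range (k + l + 1), g.coeff m * ((a - b) * (a + b) ^ m) := by
    intro a b
    rw [eval_eq_sum_range' (Nat.lt_succ_of_le hg), mul_sum]
    exact sum_congr rfl fun m _ => by ring
  simp_rw [hexpand]
  rw [nodalPairing_sum_mul, sum_congr rfl fun m hm => by
    rw [nodalPairing_sub_mul_add_pow hA hB (Nat.lt_succ_iff.mp (mem_range.mp hm))]]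
  simp only [mul_ite, mul_zero, sum_ite_eq', mem_range, Nat.lt_succ_self, if_true]

end NodalPairing

theorem ZMod.natCast_choose_ne_natCast_choose_succ {p k l : ℕ} [Fact p.Prime] (hlk : l ≤ k)
    (hk : k + 1 < p) (hkl : k + l < p) :
    ((k + l).choose k : ZMod p) ≠ (k + l).choose (k + 1) := by
  intro h
  have hrel := congrArg (Nat.cast : ℕ → ZMod p) (Nat.choose_succ_right_eq (k + l) k)
  rw [add_tsub_cancel_left, Nat.cast_mul, Nat.cast_mul, ← h] at hrel
  have hchoose : ((k + l).choose k : ZMod p) ≠ 0 := by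
    rw [Ne, ZMod.natCast_eq_zero_iff]
    exact (Nat.Prime.coprime_iff_not_dvd Fact.out).mp
      (Nat.Prime.coprime_choose_of_lt Fact.out hkl (by omega))
  have hcast := mul_left_cancel₀ hchoose hrel
  rw [ZMod.natCast_eq_natCast_iff', Nat.mod_eq_of_lt hk, Nat.mod_eq_of_lt (by omega)] at hcast
  omega

section RestrictedSumset

variable {α : Type*} [DecidableEq α] [Add α]

def restrictedSumset (A B : Finset α) : Finset α :=
  ((A ×ˢ B).filter fun x => x.1 ≠ x.2).image fun x => x.1 + x.2

infixl:65 " +̇ " => restrictedSumset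

theorem add_mem_restrictedSumset {A B : Finset α} {a b : α} (ha : a ∈ A) (hb : b ∈ B)
    (hab : a ≠ b) : a + b ∈ A +̇ B :=
  mem_image.mpr ⟨(a, b), mem_filter.mpr ⟨mem_product.mpr ⟨ha, hb⟩, hab⟩, rfl⟩

theorem restrictedSumset_mono {A₁ A₂ B₁ B₂ : Finset α} (hA : A₁ ⊆ A₂) (hB : B₁ ⊆ B₂) :
    A₁ +̇ B₁ ⊆ A₂ +̇ B₂ :=
  image_subset_image (filter_subset_filter _ (product_subset_product hA hB))

end RestrictedSumset

namespace ZMod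

variable {p : ℕ} [Fact p.Prime] {A B : Finset (ZMod p)}

theorem card_add_card_sub_two_le_card_restrictedSumset (hB : B.Nonempty) (hBA : #B < #A)
    (hp : #A + #B - 2 ≤ p) : #A + #B - 2 ≤ #(A +̇ B) := by
  obtain ⟨k, hk⟩ : ∃ k, #A = k + 2 := ⟨#A - 2, by have := hB.card_pos; omega⟩
  obtain ⟨l, hl⟩ : ∃ l, #B = l + 1 := ⟨#B - 1, by have := hB.card_pos; omega⟩
  have hAp : #A ≤ p := by simpa using card_le_univ A
  rw [hk, hl] at hp ⊢
  by_contra! hlt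
  set S := A +̇ B
  set g : (ZMod p)[X] := nodal S id * X ^ (k + l - #S)
  have hg_monic : g.Monic := nodal_monic.mul (monic_X_pow _)
  have hg_deg : g.natDegree = k + l := by
    rw [nodal_monic.natDegree_mul (monic_X_pow _), natDegree_nodal, natDegree_X_pow]
    omega
  have hvanish : nodalPairing A B (fun a b => (a - b) * g.eval (a + b)) = 0 :=
    sum_eq_zero fun a ha => sum_eq_zero fun b hb => mul_eq_zero_of_right _ <| by
      show (a - b) * g.eval (a + b) = 0
      rcases eq_or_ne a b with rfl | hab
      · rw [sub_self, zero_mul]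
      · have hroot : (nodal S id).eval (a + b) = 0 :=
          eval_nodal_at_node (v := id) (i := a + b) (add_mem_restrictedSumset ha hb hab)
        rw [eval_mul, hroot, zero_mul, mul_zero]
  have hg_lead : g.coeff (k + l) = 1 := hg_deg ▸ hg_monic.coeff_natDegree
  rw [nodalPairing_sub_mul_eval_add hk hl hg_deg.le, hg_lead, one_mul, sub_eq_zero] at hvanish
  exact natCast_choose_ne_natCast_choose_succ (by omega) (by omega) (by omega) hvanish

theorem min_le_card_restrictedSumset (hB : B.Nonempty) (hBA : #B < #A) :
    min p (#A + #B - 2) ≤ #(A +̇ B) := by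
  rcases le_or_gt (#A + #B - 2) p with hle | hgt
  · exact (min_le_right _ _).trans (card_add_card_sub_two_le_card_restrictedSumset hB hBA hle)
  have hAp : #A ≤ p := by simpa using card_le_univ A
  obtain ⟨B', hB'B, hB'⟩ := exists_subset_card_eq (s := B) (n := p + 2 - #A) (by omega)
  calc min p (#A + #B - 2) ≤ #A + #B' - 2 := by omega
    _ ≤ #(A +̇ B') := card_add_card_sub_two_le_card_restrictedSumset
        (card_pos.mp (by omega)) (by omega) (by omega)
    _ ≤ #(A +̇ B) := card_le_card (restrictedSumset_mono subset_rfl hB'B)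

end ZMod

theorem erdos_heilbronn (p : ℕ) (hp : p.Prime) (A : Finset (ZMod p)) :
    min p (2 * A.card - 3) ≤
      (((A ×ˢ A).filter fun x => x.1 ≠ x.2).image fun x => x.1 + x.2).card := by
  have : Fact p.Prime := ⟨hp⟩
  rcases lt_or_ge #A 2 with hA | hA
  · simp [show 2 * #A - 3 = 0 by omega]
  obtain ⟨a, ha⟩ := card_pos.mp (by omega : 0 < #A)
  have hcard : #(A.erase a) = #A - 1 := card_erase_of_mem ha
  calc min p (2 * #A - 3) = min p (#A + #(A.erase a) - 2) := by rw [hcard]; congr 1; omega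
    _ ≤ #(A +̇ A.erase a) :=
        ZMod.min_le_card_restrictedSumset (card_pos.mp (by omega)) (by omega)
    _ ≤ #(A +̇ A) := card_le_card (restrictedSumset_mono subset_rfl (erase_subset a A))
end

section
/- Let p be a prime, A ⊆ F_p, and h an integer with 0 ≤ h ≤ |A|. Then |h^∧A| ≥ min{p, h(|A| - h) + 1}, where h^∧A is the set of sums of h pairwise distinct elements of A. -/
/-!
Alon–Nathanson–Ruzsa polynomial method. If `S := h^∧A` had `m < min p (h (|A| - h) + 1)`
elements, the polynomial `∏ c ∈ S, (∑ X i - c) * ∏ i < j, (X j - X i)` in `h` variables would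
vanish on `A^h`: at injective points because of the first factor, elsewhere because of the
second. Its degree is `m + ∑ i, i`, and for a suitable strictly increasing exponent `t` with
`t i < |A|` its coefficient at `X^t` equals that of `(∑ X i) ^ m * ∏ i < j, (X j - X i)`,
namely `m! / ∏ (t i)! * ∏ i < j, (t j - t i)`, which is nonzero mod `p`. This contradicts
Alon's Combinatorial Nullstellensatz.
-/

/-- `kFoldSum A h` is `h^∧A`, the set of sums of `h` pairwise distinct elements of `A`. -/
def kFoldSum {M : Type*} [AddCommMonoid M] [DecidableEq M] (A : Finset M) (h : ℕ) : Finset M :=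
  (A.powersetCard h).image fun S => S.sum id

open Finset MvPolynomial
open scoped Nat

theorem sum_range_min_sub_mul (w m n : ℕ) :
    ∑ j ∈ range n, min w (m - w * j) = min m (w * n) := by
  induction n with
  | zero => simp
  | succ n ih =>
    rw [sum_range_succ, ih, Nat.mul_succ]
    omega

theorem exists_strictMono_lt_sum_eq {h k m : ℕ} (hhk : h ≤ k) (hm : m ≤ h * (k - h)) :
    ∃ t : Fin h →₀ ℕ, StrictMono t ∧ (∀ i, t i < k) ∧ m + ∑ i : Fin h, (i : ℕ) = t.degree := by
  set w := k - h
  -- `t i = i + s i`, where the excess `s` is filled greedily from the top in steps of at most `w`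
  set s : ℕ → ℕ := fun j => min w (m - w * (h - 1 - j))
  have hs_mono : Monotone s := fun i j hij => by
    have : w * (h - 1 - j) ≤ w * (h - 1 - i) := Nat.mul_le_mul_left _ (by omega)
    simp only [s]
    omega
  have hs_sum : ∑ i : Fin h, s i = m := by
    calc ∑ i : Fin h, s i = ∑ j ∈ range h, s (h - 1 - j) := by
          rw [Fin.sum_univ_eq_sum_range s, sum_range_reflect]
      _ = ∑ j ∈ range h, min w (m - w * j) := sum_congr rfl fun j hj => by
          rw [mem_range] at hj
          simp only [s, Nat.sub_sub_self (Nat.le_sub_one_of_lt hj)]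
      _ = m := by rw [sum_range_min_sub_mul, mul_comm, min_eq_left hm]
  refine ⟨Finsupp.equivFunOnFinite.symm fun i => i + s i, fun i j hij => ?_, fun i => ?_, ?_⟩
  · have := hs_mono (Fin.le_of_lt hij)
    simp only [Finsupp.coe_equivFunOnFinite_symm]
    omega
  · have : s i ≤ w := min_le_left _ _
    simp only [Finsupp.coe_equivFunOnFinite_symm]
    omega
  · rw [Finsupp.degree_eq_sum]
    simp only [Finsupp.coe_equivFunOnFinite_symm, sum_add_distrib, hs_sum]
    ring

namespace MvPolynomial

variable {R σ : Type*} [CommRing R]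

theorem totalDegree_sum_X_le [Fintype σ] : (∑ i, X i : MvPolynomial σ R).totalDegree ≤ 1 :=
  (IsHomogeneous.sum _ _ _ fun i _ => isHomogeneous_X R i).totalDegree_le

theorem totalDegree_prod_sub_C_le {L : MvPolynomial σ R} (hL : L.totalDegree ≤ 1)
    (S : Finset R) : (∏ c ∈ S, (L - C c)).totalDegree ≤ #S := by
  refine (totalDegree_finsetProd _ _).trans ?_
  simpa using sum_le_sum fun c (_ : c ∈ S) => (totalDegree_sub_C_le L c).trans hL

theorem coeff_prod_sub_C_mul {L : MvPolynomial σ R} (hL : L.totalDegree ≤ 1) (S : Finset R)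
    {V : MvPolynomial σ R} {b : ℕ} (hV : V.totalDegree ≤ b) {t : σ →₀ ℕ}
    (ht : t.degree = #S + b) :
    coeff t ((∏ c ∈ S, (L - C c)) * V) = coeff t (L ^ #S * V) := by
  classical
  induction S using Finset.induction_on generalizing V b with
  | empty => simp
  | insert a S ha ih =>
    rw [card_insert_of_notMem ha] at ht ⊢
    have hlow : coeff t (C a * ((∏ c ∈ S, (L - C c)) * V)) = 0 := by
      refine coeff_eq_zero_of_totalDegree_lt ?_
      calc _ ≤ 0 + (#S + b) := (totalDegree_mul _ _).trans
              (add_le_add (totalDegree_C a).le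
                ((totalDegree_mul _ _).trans (add_le_add (totalDegree_prod_sub_C_le hL S) hV)))
        _ < t.degree := by omega
    have hLV : (L * V).totalDegree ≤ b + 1 :=
      (totalDegree_mul _ _).trans (by omega)
    rw [prod_insert ha, sub_mul, sub_mul, mul_assoc, mul_assoc, coeff_sub, hlow, sub_zero,
      mul_left_comm, ih hLV (by omega), pow_succ, mul_assoc]

theorem factorial_mul_coeff_sum_X_pow_mul_monomial [Fintype σ] (m : ℕ) {t u : σ →₀ ℕ}
    (htu : m + u.degree = t.degree) :
    (∏ i, ((t i)! : R)) * coeff t ((∑ i, X i) ^ m * monomial u 1)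
      = m ! * ∏ i, ((t i).descFactorial (u i) : R) := by
  rw [coeff_mul_monomial', mul_one]
  split_ifs with hut
  · have hdeg : (t - u).degree = m := by
      have := congrArg Finsupp.degree (tsub_add_cancel_of_le hut)
      rw [map_add] at this
      omega
    have hsum : ((t - u).sum fun _ e => e) = m := hdeg
    rw [coeff_sum_X_pow_of_fintype, if_pos hsum]
    have key : (∏ i, (t i)!) * (t - u).multinomial = m ! * ∏ i, (t i).descFactorial (u i) := by
      have hfac : ∀ i, (t i)! = (t i).descFactorial (u i) * ((t - u) i)! := fun i => by
        rw [Finsupp.tsub_apply, mul_comm, Nat.factorial_mul_descFactorial (hut i)]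
      rw [prod_congr rfl fun i _ => hfac i, prod_mul_distrib, mul_assoc,
        ← Finsupp.multinomial_of_support_subset (subset_univ _), Nat.multinomial_spec,
        ← Finsupp.degree_eq_sum, hdeg, mul_comm]
    simpa using congrArg (Nat.cast : ℕ → R) key
  · obtain ⟨i, hi⟩ : ∃ i, t i < u i := by simpa [Finsupp.le_def] using hut
    have hzero : ((t i).descFactorial (u i) : R) = 0 := by
      rw [Nat.descFactorial_eq_zero_iff_lt.mpr hi, Nat.cast_zero]
    rw [mul_zero, prod_eq_zero (mem_univ i) hzero, mul_zero]

variable {n : ℕ}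

theorem isHomogeneous_det_vandermonde_X :
    (Matrix.vandermonde (X : Fin n → MvPolynomial (Fin n) R)).det.IsHomogeneous
      (∑ i : Fin n, (i : ℕ)) := by
  rw [Matrix.det_apply']
  refine IsHomogeneous.sum _ _ _ fun e _ => ?_
  rw [← map_intCast (C : R →+* MvPolynomial (Fin n) R), ← zero_add (∑ i : Fin n, (i : ℕ))]
  exact (isHomogeneous_C _ _).mul
    (IsHomogeneous.prod _ _ _ fun i _ => isHomogeneous_X_pow (e i) (i : ℕ))

theorem prod_vandermonde_X_perm (e : Equiv.Perm (Fin n)) :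
    ∏ i, Matrix.vandermonde (X : Fin n → MvPolynomial (Fin n) R) (e i) i
      = monomial (Finsupp.equivFunOnFinite.symm fun j => ((e.symm j : Fin n) : ℕ)) 1 := by
  rw [monomial_eq, C_1, one_mul, Finsupp.prod_fintype _ _ (fun _ => pow_zero _)]
  conv_rhs => rw [← Equiv.prod_comp e]
  simp [Matrix.vandermonde]

theorem factorial_mul_coeff_sum_X_pow_mul_det_vandermonde [IsDomain R] (m : ℕ) {t : Fin n →₀ ℕ}
    (ht : m + ∑ i : Fin n, (i : ℕ) = t.degree) :
    (∏ i, ((t i)! : R)) * coeff t ((∑ i, X i) ^ m * (Matrix.vandermonde X).det)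
      = m ! * (Matrix.vandermonde fun i => (t i : R)).det := by
  rw [Matrix.det_eval_matrixOfPolynomials_eq_det_vandermonde _ (fun j => descPochhammer R j)
      (fun j => descPochhammer_natDegree R j) (fun j => monic_descPochhammer R j),
    Matrix.det_apply', Matrix.det_apply', mul_sum, coeff_sum, mul_sum, mul_sum]
  refine sum_congr rfl fun e _ => ?_
  have hdeg : m + (Finsupp.equivFunOnFinite.symm fun j => ((e.symm j : Fin n) : ℕ)).degree
      = t.degree := by
    rw [Finsupp.degree_eq_sum, ← ht]
    simp only [Finsupp.coe_equivFunOnFinite_symm]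
    rw [e.symm.sum_comp (fun j : Fin n => (j : ℕ))]
  rw [prod_vandermonde_X_perm, mul_left_comm, ← map_intCast (C : R →+* MvPolynomial (Fin n) R),
    coeff_C_mul, mul_left_comm, factorial_mul_coeff_sum_X_pow_mul_monomial m hdeg]
  conv_lhs => rw [← Equiv.prod_comp e]
  simp [descPochhammer_eval_eq_descFactorial]
  ring

theorem coeff_sum_X_pow_mul_det_vandermonde_ne_zero {p n m : ℕ} [Fact p.Prime] (hm : m < p)
    {t : Fin n →₀ ℕ} (ht : StrictMono t) (htp : ∀ i, t i < p)
    (hsum : m + ∑ i : Fin n, (i : ℕ) = t.degree) :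
    coeff t ((∑ i, X i) ^ m * (Matrix.vandermonde X).det : MvPolynomial (Fin n) (ZMod p)) ≠ 0 := by
  have hfac : (m ! : ZMod p) ≠ 0 := by
    rw [Ne, ZMod.natCast_eq_zero_iff, (Fact.out : p.Prime).dvd_factorial]
    omega
  have hinj : Function.Injective fun i => (t i : ZMod p) := fun i j hij => by
    rw [ZMod.natCast_eq_natCast_iff', Nat.mod_eq_of_lt (htp i), Nat.mod_eq_of_lt (htp j)] at hij
    exact ht.injective hij
  intro h0
  have := factorial_mul_coeff_sum_X_pow_mul_det_vandermonde (R := ZMod p) m hsum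
  rw [h0, mul_zero, eq_comm] at this
  exact mul_ne_zero hfac (Matrix.det_vandermonde_ne_zero_iff.mpr hinj) this

end MvPolynomial

theorem sum_mem_kFoldSum {M : Type*} [AddCommMonoid M] [DecidableEq M] {A : Finset M} {h : ℕ}
    {x : Fin h → M} (hx : Function.Injective x) (hxA : ∀ i, x i ∈ A) :
    ∑ i, x i ∈ kFoldSum A h := by
  refine mem_image.mpr ⟨univ.image x, mem_powersetCard.mpr ⟨?_, ?_⟩, ?_⟩
  · exact image_subset_iff.mpr fun i _ => hxA i
  · rw [card_image_of_injective _ hx, Finset.card_univ, Fintype.card_fin]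
  · rw [sum_image fun i _ j _ hij => hx hij]
    rfl

theorem eval_prod_sub_C_mul_det_vandermonde_eq_zero {R : Type*} [CommRing R] [IsDomain R]
    [DecidableEq R] {A : Finset R} {h : ℕ} {x : Fin h → R} (hxA : ∀ i, x i ∈ A) :
    eval x ((∏ c ∈ kFoldSum A h, (∑ i, X i - C c)) * (Matrix.vandermonde X).det) = 0 := by
  rw [eval_mul, map_prod, RingHom.map_det]
  by_cases hx : Function.Injective x
  · refine mul_eq_zero_of_left (prod_eq_zero (sum_mem_kFoldSum hx hxA) ?_) _
    simp
  · have hV : (eval x).mapMatrix (Matrix.vandermonde X) = Matrix.vandermonde x := by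
      ext i j
      simp [Matrix.vandermonde]
    rw [hV, Matrix.det_vandermonde_eq_zero_iff.mpr, mul_zero]
    simpa [Function.Injective, and_comm] using hx

theorem dias_da_silva_hamidoune (p : ℕ) (hp : p.Prime) (A : Finset (ZMod p))
    (h : ℕ) (hh : h ≤ A.card) :
    min p (h * (A.card - h) + 1) ≤ (kFoldSum A h).card := by
  have := Fact.mk hp
  by_contra! hlt
  set S := kFoldSum A h
  have hAp : #A ≤ p := by simpa using A.card_le_univ
  obtain ⟨t, ht_mono, htA, ht_deg⟩ := exists_strictMono_lt_sum_eq (m := #S) hh (by omega)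
  set f : MvPolynomial (Fin h) (ZMod p) :=
    (∏ c ∈ S, (∑ i, X i - C c)) * (Matrix.vandermonde X).det
  have hV := isHomogeneous_det_vandermonde_X (R := ZMod p) (n := h) |>.totalDegree_le
  have hf_coeff : coeff t f ≠ 0 := by
    rw [coeff_prod_sub_C_mul totalDegree_sum_X_le S hV ht_deg.symm]
    exact coeff_sum_X_pow_mul_det_vandermonde_ne_zero (by omega) ht_mono
      (fun i => (htA i).trans_le hAp) ht_deg
  have hf_deg : f.totalDegree = t.degree :=
    le_antisymm (ht_deg ▸ (totalDegree_mul _ _).trans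
        (add_le_add (totalDegree_prod_sub_C_le totalDegree_sum_X_le S) hV))
      (le_totalDegree (mem_support_iff.mpr hf_coeff))
  obtain ⟨x, hxA, hx⟩ :=
    combinatorial_nullstellensatz_exists_eval_nonzero f t hf_coeff hf_deg (fun _ => A) htA
  exact hx (eval_prod_sub_C_mul_det_vandermonde_eq_zero hxA)
end

section
/- For integers 0 ≤ h ≤ d, the set of sums of h pairwise distinct elements of B = {1, 2, ..., d} ⊆ ℤ equals the integer interval [h(h+1)/2, d(d+1)/2 - (d-h)(d-h+1)/2], and hence has cardinality h(d-h) + 1. -/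
/-!
With `T n = n (n + 1) / 2`, the `h`-fold sums of `{1, …, d}` fill the interval
`[T h, T h + h (d - h)]`, whose upper end is `T d - T (d - h)` because
`T (a + b) = T a + T b + a b`.
By induction on `d`: the `(k + 1)`-subsets of `{1, …, d + 1}` either avoid `d + 1` or contain it,
so their sums are the `(k + 1)`-fold sums of `{1, …, d}` together with the `k`-fold sums shifted
by `d + 1`. Both are intervals by induction, and they overlap or abut, so their union is one.
-/

open Finset

def triangular (n : ℤ) : ℤ := n * (n + 1) / 2

lemma two_mul_triangular (n : ℤ) : 2 * triangular n = n * (n + 1) :=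
  Int.mul_ediv_cancel' (Int.even_mul_succ_self n).two_dvd

lemma triangular_add (m n : ℤ) :
    triangular (m + n) = triangular m + triangular n + m * n := by
  linarith [two_mul_triangular m, two_mul_triangular n, two_mul_triangular (m + n)]

@[simp] lemma triangular_zero : triangular 0 = 0 := rfl

lemma triangular_add_one (n : ℤ) : triangular (n + 1) = triangular n + (n + 1) := by
  rw [triangular_add, show triangular 1 = 1 from rfl, mul_one]
  ring

lemma image_sum_powersetCard_succ_insert {α : Type*} [DecidableEq α] [AddCommMonoid α]
    {s : Finset α} {x : α} (hx : x ∉ s) (k : ℕ) :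
    ((insert x s).powersetCard (k + 1)).image (fun t => t.sum id) =
      (s.powersetCard (k + 1)).image (fun t => t.sum id) ∪
        ((s.powersetCard k).image fun t => t.sum id).image (x + ·) := by
  rw [powersetCard_succ_insert hx, image_union, image_image, image_image]
  congr 1
  refine image_congr fun t ht => ?_
  have hxt : x ∉ t := fun h => hx ((mem_powersetCard.1 ht).1 h)
  simp [sum_insert hxt]

lemma Int.Icc_union_Icc_of_le_add_one {a b c e : ℤ} (hac : a ≤ c) (hcb : c ≤ b + 1)
    (hbe : b ≤ e) : Icc a b ∪ Icc c e = Icc a e := by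
  ext x
  simp only [mem_union, mem_Icc]
  omega

theorem image_sum_powersetCard_Icc_one (d h : ℕ) (hh : h ≤ d) :
    ((Icc (1 : ℤ) d).powersetCard h).image (fun t => t.sum id) =
      Icc (triangular h) (triangular h + h * (d - h)) := by
  induction d generalizing h with
  | zero =>
    obtain rfl : h = 0 := by omega
    simp
  | succ d ih =>
    rcases h with _ | k
    · simp
    have hIcc : Icc (1 : ℤ) ((d + 1 : ℕ) : ℤ) = insert ((d : ℤ) + 1) (Icc (1 : ℤ) d) := by
      push_cast
      exact (insert_Icc_right_eq_Icc_add_one (by omega)).symm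
    rw [hIcc, image_sum_powersetCard_succ_insert (by simp), ih k (by omega), image_add_left_Icc]
    rcases Nat.lt_or_ge k d with hkd | hkd
    · have hkd' : (k : ℤ) + 1 ≤ d := by exact_mod_cast hkd
      rw [ih (k + 1) hkd, Int.Icc_union_Icc_of_le_add_one] <;> push_cast [triangular_add_one]
      · congr 1; ring
      · linarith
      · nlinarith
      · nlinarith
    · obtain rfl : k = d := by omega
      rw [powersetCard_eq_empty.2 (by simp), image_empty, empty_union]
      push_cast [triangular_add_one]
      congr 1 <;> ring

theorem kfold_sum_of_interval (d h : ℕ) (hh : h ≤ d) :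
    (((Finset.Icc (1 : ℤ) d).powersetCard h).image fun S => S.sum id) =
      Finset.Icc ((h * (h + 1) : ℤ) / 2)
        ((d * (d + 1) : ℤ) / 2 - ((d - h) * (d - h + 1) : ℤ) / 2) ∧
    (((Finset.Icc (1 : ℤ) d).powersetCard h).image fun S => S.sum id).card =
      h * (d - h) + 1 := by
  have hd : triangular d = triangular h + triangular (d - h) + h * (d - h) := by
    rw [← triangular_add, add_sub_cancel]
  rw [image_sum_powersetCard_Icc_one d h hh, Int.card_Icc]
  refine ⟨?_, ?_⟩
  · change _ = Icc (triangular h) (triangular d - triangular (d - h))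
    rw [hd]
    congr 1
    ring
  · rw [add_assoc, add_sub_cancel_left, ← Nat.cast_sub hh]
    norm_cast
end

section
/- Let F be a field, P ∈ F[X_1,...,X_d] a polynomial of total degree k_1 + ... + k_d whose coefficient of the monomial X_1^{k_1}···X_d^{k_d} is nonzero. Then for any finite subsets A_1, ..., A_d of F with |A_i| > k_i for all i, there exists a point (a_1,...,a_d) ∈ A_1 × ... × A_d with P(a_1,...,a_d) ≠ 0. -/
theorem combinatorial_nullstellensatz {F : Type*} [Field F] (d : ℕ) (k : Fin d → ℕ)
    (P : MvPolynomial (Fin d) F)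
    (hdeg : P.totalDegree = ∑ i, k i)
    (hcoeff : P.coeff (Finsupp.equivFunOnFinite.symm k) ≠ 0)
    (A : Fin d → Finset F) (hA : ∀ i, k i < (A i).card) :
    ∃ a : Fin d → F, (∀ i, a i ∈ A i) ∧ MvPolynomial.eval a P ≠ 0 :=
  MvPolynomial.combinatorial_nullstellensatz_exists_eval_nonzero P _ hcoeff
    (by rw [hdeg, Finsupp.degree_eq_sum]; rfl) A hA
end

section
/- Let F be a field, P ∈ F[X_1,...,X_d] a polynomial of total degree at most k_1 + ... + k_d, and A_1, ..., A_d finite subsets of F with |A_i| = k_i + 1. Set g_i(X) = Π_{a∈A_i}(X - a). Then the coefficient of X_1^{k_1}···X_d^{k_d} in P equals Σ_{(b_1,...,b_d) ∈ A_1×...×A_d} P(b_1,...,b_d) / Π_{i=1}^d g_i'(b_i). -/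
open Polynomial Finset

lemma coeff_basis {F : Type*} [Field F] [DecidableEq F] (A : Finset F) (k : ℕ)
    (hA : A.card = k + 1) (b : F) (hb : b ∈ A) :
    (Lagrange.basis A id b).coeff k = Lagrange.nodalWeight A id b := by
  have hinj : Set.InjOn (id : F → F) A := fun x _ y _ h => h
  rw [Lagrange.basis_eq_prod_sub_inv_mul_nodal_div hb,
    ← Lagrange.nodal_erase_eq_nodal_div hb, coeff_C_mul]
  have hmonic : (Lagrange.nodal (A.erase b) (id : F → F)).Monic := Lagrange.nodal_monic
  have hdeg : (Lagrange.nodal (A.erase b) (id : F → F)).natDegree = k := by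
    rw [Lagrange.natDegree_nodal, card_erase_of_mem hb, hA]
    omega
  rw [← hdeg, hmonic.coeff_natDegree, mul_one]

lemma oneDim {F : Type*} [Field F] [DecidableEq F] (A : Finset F) (k m : ℕ)
    (hA : A.card = k + 1) (hm : m ≤ k) :
    ∑ b ∈ A, b ^ m / (Polynomial.derivative (∏ a ∈ A, (X - C a))).eval b
      = if m = k then 1 else 0 := by
  have hinj : Set.InjOn (id : F → F) A := fun x _ y _ h => h
  have hnodal : (∏ a ∈ A, (X - C a)) = Lagrange.nodal A (id : F → F) := by
    rw [Lagrange.nodal_eq]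
    rfl
  have hdeg : (X ^ m : F[X]).degree < A.card := by
    rw [hA, degree_X_pow]
    exact_mod_cast Nat.lt_succ_of_le hm
  have hint := Lagrange.eq_interpolate (f := (X ^ m : F[X])) hinj hdeg
  have := congrArg (fun p => Polynomial.coeff p k) hint
  simp only [Lagrange.interpolate_apply, finset_sum_coeff, coeff_C_mul, coeff_X_pow,
    eval_pow, eval_X, id] at this
  rw [eq_comm] at this
  calc ∑ b ∈ A, b ^ m / (Polynomial.derivative (∏ a ∈ A, (X - C a))).eval b
      = ∑ b ∈ A, b ^ m * (Lagrange.basis A id b).coeff k := by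
        refine Finset.sum_congr rfl fun b hb => ?_
        rw [coeff_basis A k hA b hb, Lagrange.nodalWeight_eq_eval_derivative_nodal hb,
          div_eq_mul_inv, hnodal]
        rfl
    _ = if m = k then 1 else 0 := by rw [this]; simp [eq_comm]

theorem coefficient_formula {F : Type*} [Field F] [DecidableEq F] (d : ℕ) (k : Fin d → ℕ)
    (P : MvPolynomial (Fin d) F)
    (hdeg : P.totalDegree ≤ ∑ i, k i)
    (A : Fin d → Finset F) (hA : ∀ i, (A i).card = k i + 1) :
    P.coeff (Finsupp.equivFunOnFinite.symm k) =
      ∑ b ∈ Fintype.piFinset A,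
        MvPolynomial.eval b P /
          ∏ i, (Polynomial.derivative
              (∏ a ∈ A i, (Polynomial.X - Polynomial.C a))).eval (b i) := by
  classical
  set D : Fin d → F → F := fun i c => (Polynomial.derivative (∏ a ∈ A i, (X - C a))).eval c
    with hD
  have key : ∀ α : (Fin d) →₀ ℕ, α ∈ P.support →
      ∏ i, (∑ c ∈ A i, c ^ α i / D i c)
        = if α = Finsupp.equivFunOnFinite.symm k then 1 else 0 := by
    intro α hα
    by_cases hcase : α = Finsupp.equivFunOnFinite.symm k
    · subst hcase
      simp only [if_pos rfl]
      refine Finset.prod_eq_one fun i _ => ?_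
      have : (Finsupp.equivFunOnFinite.symm k) i = k i := rfl
      rw [this, oneDim (A i) (k i) (k i) (hA i) le_rfl, if_pos rfl]
    · rw [if_neg hcase]
      have hsum : ∑ i, α i ≤ ∑ i, k i := by
        refine le_trans ?_ hdeg
        have h1 : ∑ i, α i = ∑ i ∈ α.support, α i := by
          refine (Finset.sum_subset (Finset.subset_univ _) ?_).symm
          intro x _ hx
          simpa using hx
        rw [h1]
        exact MvPolynomial.le_totalDegree hα
      have hex : ∃ j, α j < k j := by
        by_contra h
        push_neg at h
        apply hcase
        have heq : ∀ i, α i = k i := by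
          intro i
          by_contra hne
          have hlt : k i < α i := lt_of_le_of_ne (h i) (Ne.symm hne)
          have : ∑ i, k i < ∑ i, α i :=
            Finset.sum_lt_sum (fun j _ => h j) ⟨i, Finset.mem_univ i, hlt⟩
          omega
        ext i
        rw [heq i]; rfl
      obtain ⟨j, hj⟩ := hex
      refine Finset.prod_eq_zero (Finset.mem_univ j) ?_
      rw [oneDim (A j) (k j) (α j) (hA j) hj.le, if_neg hj.ne]
  rw [eq_comm]
  calc ∑ b ∈ Fintype.piFinset A, MvPolynomial.eval b P / ∏ i, D i (b i)
      = ∑ b ∈ Fintype.piFinset A, ∑ α ∈ P.support,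
          P.coeff α * ∏ i, ((b i) ^ α i / D i (b i)) := by
        refine Finset.sum_congr rfl fun b _ => ?_
        rw [MvPolynomial.eval_eq', div_eq_mul_inv, Finset.sum_mul]
        refine Finset.sum_congr rfl fun α _ => ?_
        rw [mul_assoc]
        congr 1
        rw [← Finset.prod_inv_distrib, ← Finset.prod_mul_distrib]
        exact Finset.prod_congr rfl fun i _ => (div_eq_mul_inv _ _).symm
    _ = ∑ α ∈ P.support, P.coeff α * ∑ b ∈ Fintype.piFinset A,
          ∏ i, ((b i) ^ α i / D i (b i)) := by
        rw [Finset.sum_comm]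
        exact Finset.sum_congr rfl fun α _ => (Finset.mul_sum _ _ _).symm
    _ = ∑ α ∈ P.support, P.coeff α *
          (if α = Finsupp.equivFunOnFinite.symm k then 1 else 0) := by
        refine Finset.sum_congr rfl fun α hα => ?_
        rw [← key α hα,
          ← Finset.prod_univ_sum (t := A) (f := fun i c => c ^ α i / D i c)]
    _ = P.coeff (Finsupp.equivFunOnFinite.symm k) := by
        simp only [mul_ite, mul_one, mul_zero]
        rw [Finset.sum_ite_eq' P.support _ (fun α => P.coeff α)]
        split_ifs with h
        · rfl
        · exact (MvPolynomial.notMem_support_iff.mp h).symm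
end

section
/- Let k ≥ 3 and A = {1, -2, 3, 4, ..., k} ⊆ ℤ (i.e., the set {1,...,k} with 2 replaced by -2). Then the set of sums of nonempty proper-size subsets of A of size between 1 and k-1 equals {-2, -1} ∪ [1, k(k+1)/2 - 5] ∪ {k(k+1)/2 - 3, k(k+1)/2 - 2}, and has cardinality k(k+1)/2 - 1. -/
/-!
Write `A = insert (-2) B` with `B = [1, k] \ {2}`, whose elements are positive, and put
`s = k(k+1)/2`, so that `∑ B = s - 2`. A subset of `A` with between `1` and `k - 1 = #B` elements
either avoids `-2`, and is then a nonempty subset of `B`, or is `-2` added to a proper subset of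
`B`. By positivity these contribute the subset sums of `B` other than `0`, and those other than
`∑ B` shifted by `-2`. Adding `k + 1` to `B` shows by induction that the subset sums of `B` are
`{0, 1} ∪ [3, s - 5] ∪ {s - 3, s - 2}`; what is left is interval arithmetic.
-/

open Finset

theorem image_filter_eq_erase_image {α β : Type*} [DecidableEq α] {s : Finset β} {p : β → Prop}
    [DecidablePred p] {f : β → α} {c : α} (h : ∀ x ∈ s, p x ↔ f x ≠ c) :
    (s.filter p).image f = (s.image f).erase c := by
  rw [← filter_ne', filter_image]
  exact congrArg _ (filter_congr h)

section PositiveSums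

variable {α : Type*} [AddCommMonoid α] [PartialOrder α] [IsOrderedCancelAddMonoid α]
  {B S : Finset α}

theorem sum_id_eq_zero_iff_of_pos (hS : ∀ x ∈ S, 0 < x) : S.sum id = 0 ↔ S = ∅ := by
  refine (sum_eq_zero_iff_of_nonneg fun x hx => (hS x hx).le).trans ?_
  rw [eq_empty_iff_forall_notMem]
  exact forall₂_congr fun x hx => iff_false_intro (hS x hx).ne'

theorem sum_id_eq_sum_id_iff_of_subset (hB : ∀ x ∈ B, 0 < x) (hS : S ⊆ B) :
    S.sum id = B.sum id ↔ S = B := by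
  refine ⟨fun h => ?_, fun h => h ▸ rfl⟩
  by_contra hne
  obtain ⟨x, hxB, hxS⟩ := not_subset.1 fun h' => hne (hS.antisymm h')
  exact (sum_lt_sum_of_subset hS hxB hxS (hB x hxB) fun y hy _ => (hB y hy).le).ne h

end PositiveSums

section SubsetSums

variable {α : Type*} [DecidableEq α] [AddCommMonoid α] {B : Finset α} {a : α}

def subsetSums (B : Finset α) : Finset α :=
  B.powerset.image fun S => S.sum id

theorem sum_id_insert_eq_add (ha : a ∉ B) : (insert a B).sum id = B.sum id + a := by
  rw [sum_insert ha, id, add_comm]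

theorem subsetSums_insert (ha : a ∉ B) :
    subsetSums (insert a B) = subsetSums B ∪ (subsetSums B).image (· + a) := by
  rw [subsetSums, powerset_insert, image_union, image_image, subsetSums, image_image]
  exact congrArg _ (image_congr fun T hT => sum_id_insert_eq_add fun h => ha (mem_powerset.1 hT h))

theorem image_sum_filter_card_insert [PartialOrder α] [IsOrderedCancelAddMonoid α] (ha : a ∉ B)
    (hB : ∀ x ∈ B, 0 < x) :
    ((insert a B).powerset.filter fun S => 1 ≤ S.card ∧ S.card ≤ B.card).image (·.sum id) =
      (subsetSums B).erase 0 ∪ ((subsetSums B).erase (B.sum id)).image (· + a) := by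
  rw [powerset_insert, filter_union, image_union, filter_image, image_image, subsetSums]
  congr 1
  · refine image_filter_eq_erase_image fun S hS => ?_
    rw [mem_powerset] at hS
    rw [Ne, sum_id_eq_zero_iff_of_pos fun x hx => hB x (hS hx), one_le_card,
      nonempty_iff_ne_empty, and_iff_left (card_le_card hS)]
  · rw [← image_filter_eq_erase_image
      (p := fun T => 1 ≤ (insert a T).card ∧ (insert a T).card ≤ B.card), image_image]
    · exact image_congr fun T hT =>
        sum_id_insert_eq_add fun h => ha (mem_powerset.1 (mem_filter.1 hT).1 h)
    · intro T hT
      rw [mem_powerset] at hT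
      rw [Ne, sum_id_eq_sum_id_iff_of_subset hB hT, card_insert_of_notMem fun h => ha (hT h),
        and_iff_right (Nat.le_add_left 1 _), Nat.add_one_le_iff]
      exact ⟨fun h hTB => h.ne (congrArg card hTB),
        fun h => card_lt_card (_root_.ssubset_iff_subset_ne.2 ⟨hT, h⟩)⟩

end SubsetSums

theorem two_mul_ediv_two_mul_add_one (n : ℤ) : 2 * (n * (n + 1) / 2) = n * (n + 1) :=
  Int.mul_ediv_cancel' (Int.even_mul_succ_self n).two_dvd

theorem add_one_mul_add_one_add_one_ediv_two (n : ℤ) :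
    (n + 1) * (n + 1 + 1) / 2 = n * (n + 1) / 2 + (n + 1) := by
  linarith [two_mul_ediv_two_mul_add_one n, two_mul_ediv_two_mul_add_one (n + 1)]

theorem sum_Icc_one_id (k : ℕ) : (Icc (1 : ℤ) k).sum id = k * (k + 1) / 2 := by
  induction k with
  | zero => rfl
  | succ k ih =>
    rw [Nat.cast_add_one, ← insert_Icc_right_eq_Icc_add_one (by omega),
      sum_insert (by simp), ih, id, add_one_mul_add_one_add_one_ediv_two]
    ring

-- The only facts about `k(k+1)/2` that the interval arithmetic below needs.
theorem triangle_cases {k : ℕ} (hk : 3 ≤ k) :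
    k = 3 ∧ (k * (k + 1) : ℤ) / 2 = 6 ∨ k = 4 ∧ (k * (k + 1) : ℤ) / 2 = 10 ∨
      (k : ℤ) + 8 ≤ (k * (k + 1) : ℤ) / 2 := by
  rcases (show k = 3 ∨ k = 4 ∨ 5 ≤ k by omega) with rfl | rfl | hk5
  · norm_num
  · norm_num
  · have h5 : (5 : ℤ) ≤ k := by exact_mod_cast hk5
    have := two_mul_ediv_two_mul_add_one k
    right; right; nlinarith

theorem subsetSums_Icc_erase_two {k : ℕ} (hk : 3 ≤ k) :
    subsetSums ((Icc (1 : ℤ) k).erase 2) =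
      {0, 1} ∪ Icc 3 ((k * (k + 1) : ℤ) / 2 - 5) ∪
        {(k * (k + 1) : ℤ) / 2 - 3, (k * (k + 1) : ℤ) / 2 - 2} := by
  induction k, hk using Nat.le_induction with
  | base => decide
  | succ k hk ih =>
    have hk' := triangle_cases hk
    rw [Nat.cast_add_one, ← insert_Icc_right_eq_Icc_add_one (by omega),
      erase_insert_of_ne (by omega), subsetSums_insert (by simp), ih,
      add_one_mul_add_one_add_one_ediv_two]
    ext x
    simp only [mem_union, mem_insert, mem_singleton, mem_Icc, image_add_right, mem_preimage]
    omega

theorem erase_zero_union_image_add_neg_two {s : ℤ} (hs : s = 6 ∨ 10 ≤ s) :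
    ({0, 1} ∪ Icc 3 (s - 5) ∪ {s - 3, s - 2}).erase 0 ∪
        (({0, 1} ∪ Icc 3 (s - 5) ∪ {s - 3, s - 2}).erase (s - 2)).image (· + -2) =
      {-2, -1} ∪ Icc 1 (s - 5) ∪ {s - 3, s - 2} := by
  ext x
  simp only [mem_union, mem_insert, mem_singleton, mem_Icc, mem_erase, image_add_right,
    mem_preimage]
  omega

theorem card_pair_union_Icc_union_pair {s : ℤ} (hs : 5 ≤ s) :
    (({-2, -1} ∪ Icc 1 (s - 5) ∪ {s - 3, s - 2} : Finset ℤ).card : ℤ) = s - 1 := by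
  have hdiff : ({-2, -1} ∪ Icc 1 (s - 5) ∪ {s - 3, s - 2} : Finset ℤ) =
      Icc (-2) (s - 2) \ {0, s - 4} := by
    ext x
    simp only [mem_union, mem_insert, mem_singleton, mem_Icc, mem_sdiff]
    omega
  rw [hdiff, card_sdiff_of_subset (by intro x hx; simp only [mem_insert, mem_singleton] at hx; rw [mem_Icc]; omega), Int.card_Icc, card_pair (by omega)]
  omega

theorem sigma_one_one_counterexample_int (k : ℕ) (hk : 3 ≤ k) :
    ((((insert (-2 : ℤ) ((Finset.Icc (1 : ℤ) k).erase 2)).powerset.filter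
          fun S => 1 ≤ S.card ∧ S.card ≤ k - 1).image fun S => S.sum id) =
        ({-2, -1} : Finset ℤ) ∪ Finset.Icc 1 ((k * (k + 1) : ℤ) / 2 - 5) ∪
          {(k * (k + 1) : ℤ) / 2 - 3, (k * (k + 1) : ℤ) / 2 - 2}) ∧
    (((((insert (-2 : ℤ) ((Finset.Icc (1 : ℤ) k).erase 2)).powerset.filter
          fun S => 1 ≤ S.card ∧ S.card ≤ k - 1).image fun S => S.sum id).card : ℤ) =
        (k * (k + 1) : ℤ) / 2 - 1) := by
  have h2 : (2 : ℤ) ∈ Icc 1 (k : ℤ) := by rw [mem_Icc]; omega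
  have hcard : ((Icc (1 : ℤ) k).erase 2).card = k - 1 := by
    rw [card_erase_of_mem h2, Int.card_Icc]; omega
  have hsum : ((Icc (1 : ℤ) k).erase 2).sum id = (k * (k + 1) : ℤ) / 2 - 2 := by
    rw [sum_erase_eq_sub h2, sum_Icc_one_id]; rfl
  have hs : (k * (k + 1) : ℤ) / 2 = 6 ∨ 10 ≤ (k * (k + 1) : ℤ) / 2 := by
    rcases triangle_cases hk with h | h | h <;> omega
  rw [← hcard, image_sum_filter_card_insert (by simp) (fun x hx => by rw [mem_erase, mem_Icc] at hx; omega), hsum,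
    subsetSums_Icc_erase_two hk, erase_zero_union_image_add_neg_two hs]
  exact ⟨rfl, card_pair_union_Icc_union_pair (by omega)⟩
end

section
/- Let d, h, δ be integers with 0 ≤ δ < h ≤ d. Then δ!·(h(d-h) - δ)!·C(d-h+δ-1, δ)·C(h, δ)·(Π_{i=0}^{h-1} i!)·(Π_{i=0}^{d-h-1} i!)/(Π_{i=0}^{d-1} i!) = (h(d-h))!·C(d-h+δ-1, δ)·C(h, δ)·(Π_{i=0}^{h-1} i!)·(Π_{i=0}^{d-h-1} i!)/(C(h(d-h), δ)·Π_{i=0}^{d-1} i!), and this rational number is a positive integer when d - h ≥ 1. -/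
open Finset

namespace CoeffFactAux

/-- The strictly increasing enumeration of `{m', ..., m'+h} \ {m'+δ}`. -/
def xf (m' δ : ℕ) (i : ℕ) : ℕ := if i < δ then m' + i else m' + 1 + i

lemma xf_mono (m' δ : ℕ) {i j : ℕ} (hij : i ≤ j) : xf m' δ i ≤ xf m' δ j := by
  unfold xf; split_ifs <;> omega

lemma prod_range_succ_factorial (t : ℕ) :
    ∏ k ∈ range t, Nat.factorial (k + 1) =
      (∏ k ∈ range t, Nat.factorial k) * Nat.factorial t := by
  induction t with
  | zero => simp
  | succ t ih =>
      rw [prod_range_succ, ih, prod_range_succ, Nat.factorial_succ]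

/-- Vandermonde product evaluation. -/
lemma L1 (m' δ : ℕ) : ∀ s : ℕ,
    Nat.factorial δ * Nat.factorial s *
      ∏ j ∈ range (δ + s), ∏ i ∈ range j, (xf m' δ j - xf m' δ i) =
    ∏ k ∈ range (δ + s), Nat.factorial (k + 1) := by
  intro s
  induction s with
  | zero =>
      have hin : ∀ j ∈ range δ, ∏ i ∈ range j, (xf m' δ j - xf m' δ i)
          = Nat.factorial j := by
        intro j hj
        rw [mem_range] at hj
        have h1 : ∀ i ∈ range j, xf m' δ j - xf m' δ i = j - i := by
          intro i hi
          rw [mem_range] at hi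
          unfold xf; split_ifs <;> omega
        rw [prod_congr rfl h1, ← Nat.descFactorial_eq_prod_range,
          Nat.descFactorial_self]
      rw [Nat.add_zero, prod_congr rfl hin, prod_range_succ_factorial]
      simp [mul_comm]
  | succ s ih =>
      have hlast : ∏ i ∈ range (δ + s), (xf m' δ (δ + s) - xf m' δ i)
          = Nat.descFactorial (δ + s + 1) δ * Nat.factorial s := by
        rw [prod_range_add]
        congr 1
        · rw [Nat.descFactorial_eq_prod_range]
          refine prod_congr rfl fun i hi => ?_
          rw [mem_range] at hi
          unfold xf; split_ifs <;> omega
        · have h1 : ∀ i ∈ range s, xf m' δ (δ + s) - xf m' δ (δ + i) = s - i := by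
            intro i hi
            rw [mem_range] at hi
            unfold xf; split_ifs <;> omega
          rw [prod_congr rfl h1, ← Nat.descFactorial_eq_prod_range,
            Nat.descFactorial_self]
      have h2 : Nat.factorial (s + 1) * Nat.descFactorial (δ + s + 1) δ
          = Nat.factorial (δ + s + 1) := by
        have h3 := Nat.factorial_mul_descFactorial (n := δ + s + 1) (k := δ) (by omega)
        have h4 : δ + s + 1 - δ = s + 1 := by omega
        rw [h4] at h3
        exact h3
      have e : δ + (s + 1) = (δ + s) + 1 := rfl
      rw [e, prod_range_succ, prod_range_succ, hlast, ← ih, ← h2]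
      ring

/-- Factorial product evaluation. -/
lemma L2 (m' δ : ℕ) : ∀ s : ℕ,
    Nat.factorial (m' + δ) * ∏ i ∈ range (δ + s), Nat.factorial (xf m' δ i) =
    ∏ k ∈ range (δ + s + 1), Nat.factorial (m' + k) := by
  intro s
  induction s with
  | zero =>
      have hin : ∀ i ∈ range δ, Nat.factorial (xf m' δ i) = Nat.factorial (m' + i) := by
        intro i hi
        rw [mem_range] at hi
        unfold xf
        rw [if_pos hi]
      rw [Nat.add_zero, prod_congr rfl hin, prod_range_succ, mul_comm]
  | succ s ih =>
      have e : δ + (s + 1) = (δ + s) + 1 := rfl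
      rw [e, prod_range_succ (fun k => Nat.factorial (m' + k)) ((δ + s) + 1),
        prod_range_succ, ← mul_assoc, ih]
      congr 1
      unfold xf
      rw [if_neg (by omega)]
      congr 1
      omega

/-- Sum of the `xf` values. -/
lemma Lsum (m' δ : ℕ) : ∀ s : ℕ,
    ∑ i ∈ range (δ + s), xf m' δ i =
      (m' * (δ + s) + s) + ∑ i ∈ range (δ + s), i := by
  intro s
  induction s with
  | zero =>
      have hin : ∀ i ∈ range δ, xf m' δ i = m' + i := by
        intro i hi
        rw [mem_range] at hi
        unfold xf
        rw [if_pos hi]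
      rw [Nat.add_zero, sum_congr rfl hin, Finset.sum_add_distrib,
        Finset.sum_const, card_range, smul_eq_mul]
      ring
  | succ s ih =>
      have e : δ + (s + 1) = (δ + s) + 1 := rfl
      have hl : xf m' δ (δ + s) = m' + 1 + (δ + s) := by
        unfold xf; rw [if_neg (by omega)]
      rw [e, sum_range_succ, sum_range_succ, ih, hl]
      ring

/-- Conversion of the Fin-indexed Vandermonde product into a range product. -/
lemma vand_eq (m' δ hN : ℕ) :
    (∏ i : Fin hN, ∏ j ∈ Ioi i,
        ((xf m' δ (j : ℕ) : ℚ) - (xf m' δ (i : ℕ) : ℚ))) =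
    ((∏ j ∈ range hN, ∏ i ∈ range j, (xf m' δ j - xf m' δ i) : ℕ) : ℚ) := by
  have step1 : (∏ i : Fin hN, ∏ j ∈ Ioi i,
        ((xf m' δ (j : ℕ) : ℚ) - (xf m' δ (i : ℕ) : ℚ))) =
      ∏ j : Fin hN, ∏ i ∈ Iio j,
        ((xf m' δ (j : ℕ) : ℚ) - (xf m' δ (i : ℕ) : ℚ)) := by
    refine Finset.prod_comm' fun x y => ?_
    simp only [mem_univ, true_and, and_true, mem_Ioi, mem_Iio]
  rw [step1]
  have step2 : ∀ j : Fin hN, (∏ i ∈ Iio j,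
        ((xf m' δ (j : ℕ) : ℚ) - (xf m' δ (i : ℕ) : ℚ))) =
      ∏ i ∈ range (j : ℕ), ((xf m' δ (j : ℕ) : ℚ) - (xf m' δ i : ℚ)) := by
    intro j
    rw [← Nat.Iio_eq_range, ← Fin.map_valEmbedding_Iio, Finset.prod_map]
    rfl
  rw [prod_congr rfl fun j _ => step2 j]
  rw [Fin.prod_univ_eq_prod_range
    (fun a => ∏ i ∈ range a, ((xf m' δ a : ℚ) - (xf m' δ i : ℚ))) hN]
  rw [Nat.cast_prod]
  refine prod_congr rfl fun j _ => ?_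
  rw [Nat.cast_prod]
  refine prod_congr rfl fun i hi => ?_
  rw [mem_range] at hi
  rw [Nat.cast_sub (xf_mono m' δ (le_of_lt hi))]

/-- The determinant of the descending-factorial matrix. -/
lemma detA (m' δ hN : ℕ) :
    (Matrix.of fun i j : Fin hN =>
        ((xf m' δ (i : ℕ)).descFactorial (j : ℕ) : ℚ)).det =
    ((∏ j ∈ range hN, ∏ i ∈ range j, (xf m' δ j - xf m' δ i) : ℕ) : ℚ) := by
  have h1 : (Matrix.of fun i j : Fin hN =>
        ((xf m' δ (i : ℕ)).descFactorial (j : ℕ) : ℚ)) =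
      Matrix.of fun i j : Fin hN =>
        (descPochhammer ℚ (j : ℕ)).eval ((xf m' δ (i : ℕ) : ℚ)) := by
    ext i j
    simp [descPochhammer_eval_eq_descFactorial]
  rw [h1, ← Matrix.det_eval_matrixOfPolynomials_eq_det_vandermonde
      (fun i : Fin hN => (xf m' δ (i : ℕ) : ℚ))
      (fun j : Fin hN => descPochhammer ℚ (j : ℕ))
      (fun i => descPochhammer_natDegree (R := ℚ) (i : ℕ))
      (fun i => monic_descPochhammer ℚ (i : ℕ)),
    Matrix.det_vandermonde]
  exact vand_eq m' δ hN

/-- Integrality: `n! * V` is an integer multiple of `P`. -/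
lemma int_exists (m' δ s : ℕ) : ∃ z : ℤ,
    ((Nat.factorial (m' * (δ + s) + s) : ℚ)) *
      ((∏ j ∈ range (δ + s), ∏ i ∈ range j, (xf m' δ j - xf m' δ i) : ℕ) : ℚ) =
    (z : ℚ) * ((∏ i ∈ range (δ + s), Nat.factorial (xf m' δ i) : ℕ) : ℚ) := by
  set hN := δ + s with hhN
  set nn := m' * (δ + s) + s with hnn
  set P : ℕ := ∏ i ∈ range hN, Nat.factorial (xf m' δ i) with hP
  have key : ∀ σ : Equiv.Perm (Fin hN), ∃ c : ℤ,
      (Nat.factorial nn : ℚ) *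
        ∏ i : Fin hN, ((xf m' δ ((σ i : Fin hN) : ℕ)).descFactorial (i : ℕ) : ℚ)
      = (c : ℚ) * (P : ℚ) := by
    intro σ
    by_cases hσ : ∀ i : Fin hN, (i : ℕ) ≤ xf m' δ ((σ i : Fin hN) : ℕ)
    · set g : Fin hN → ℕ := fun i => xf m' δ ((σ i : Fin hN) : ℕ) - (i : ℕ) with hg
      have hsum : ∑ i : Fin hN, g i = nn := by
        have h1 : ∑ i : Fin hN, g i + ∑ i : Fin hN, (i : ℕ)
            = ∑ i : Fin hN, xf m' δ ((σ i : Fin hN) : ℕ) := by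
          rw [← Finset.sum_add_distrib]
          refine Finset.sum_congr rfl fun i _ => ?_
          have h5 := hσ i
          simp only [hg]
          omega
        have h2 : ∑ i : Fin hN, xf m' δ ((σ i : Fin hN) : ℕ)
            = ∑ i : Fin hN, xf m' δ (i : ℕ) :=
          Equiv.sum_comp σ (fun i : Fin hN => xf m' δ (i : ℕ))
        have h3 : ∑ i : Fin hN, xf m' δ (i : ℕ) = nn + ∑ i : Fin hN, (i : ℕ) := by
          rw [Fin.sum_univ_eq_sum_range (fun i => xf m' δ i) hN,
            Fin.sum_univ_eq_sum_range (fun i => i) hN]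
          exact Lsum m' δ s
        omega
      have hdvd : (∏ i : Fin hN, Nat.factorial (g i)) ∣ Nat.factorial nn := by
        rw [← hsum]
        exact Nat.prod_factorial_dvd_factorial_sum _ _
      obtain ⟨c, hc⟩ := hdvd
      refine ⟨(c : ℤ), ?_⟩
      have hfac : ∀ i : Fin hN,
          Nat.factorial (g i) * (xf m' δ ((σ i : Fin hN) : ℕ)).descFactorial (i : ℕ)
          = Nat.factorial (xf m' δ ((σ i : Fin hN) : ℕ)) := fun i =>
        Nat.factorial_mul_descFactorial (hσ i)
      have hPP : (∏ i : Fin hN, Nat.factorial (xf m' δ ((σ i : Fin hN) : ℕ))) = P := by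
        rw [Equiv.prod_comp σ (fun i : Fin hN => Nat.factorial (xf m' δ (i : ℕ)))]
        exact Fin.prod_univ_eq_prod_range (fun i => Nat.factorial (xf m' δ i)) hN
      have hmul : (∏ i : Fin hN, Nat.factorial (g i)) *
          (∏ i : Fin hN, (xf m' δ ((σ i : Fin hN) : ℕ)).descFactorial (i : ℕ)) = P := by
        rw [← Finset.prod_mul_distrib]
        rw [Finset.prod_congr rfl fun i _ => hfac i]
        exact hPP
      have hnat : Nat.factorial nn *
          (∏ i : Fin hN, (xf m' δ ((σ i : Fin hN) : ℕ)).descFactorial (i : ℕ))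
          = c * P := by
        rw [hc, mul_comm _ c, mul_assoc, hmul]
      exact_mod_cast hnat
    · push_neg at hσ
      obtain ⟨i, hi⟩ := hσ
      refine ⟨0, ?_⟩
      have hzero : ((xf m' δ ((σ i : Fin hN) : ℕ)).descFactorial (i : ℕ) : ℚ) = 0 := by
        rw [Nat.descFactorial_eq_zero_iff_lt.mpr hi]
        norm_num
      rw [Finset.prod_eq_zero (Finset.mem_univ i) hzero]
      norm_num
  choose c hc using key
  refine ⟨∑ σ : Equiv.Perm (Fin hN), ((Equiv.Perm.sign σ : ℤ) * c σ), ?_⟩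
  have hdet := detA m' δ hN
  rw [← hdet, Matrix.det_apply, Finset.mul_sum]
  push_cast
  rw [Finset.sum_mul]
  refine Finset.sum_congr rfl fun σ _ => ?_
  have h1 := hc σ
  have : (Nat.factorial nn : ℚ) * (Equiv.Perm.sign σ •
      ∏ i : Fin hN, (Matrix.of fun i j : Fin hN =>
        ((xf m' δ (i : ℕ)).descFactorial (j : ℕ) : ℚ)) (σ i) i)
      = ((Equiv.Perm.sign σ : ℤ) : ℚ) *
        ((Nat.factorial nn : ℚ) *
          ∏ i : Fin hN, ((xf m' δ ((σ i : Fin hN) : ℕ)).descFactorial (i : ℕ) : ℚ)) := by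
    simp only [Matrix.of_apply, Units.smul_def, zsmul_eq_mul]
    ring
  rw [this, h1]
  ring

end CoeffFactAux

open CoeffFactAux in
theorem coefficient_factorial_identity (d h δ : ℕ) (h1 : δ < h) (h2 : h ≤ d) :
    ((Nat.factorial δ : ℚ) * Nat.factorial (h * (d - h) - δ) *
          Nat.choose (d - h + δ - 1) δ * Nat.choose h δ *
          (∏ i ∈ Finset.range h, (Nat.factorial i : ℚ)) *
          (∏ i ∈ Finset.range (d - h), (Nat.factorial i : ℚ)) /
          ∏ i ∈ Finset.range d, (Nat.factorial i : ℚ)) =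
        (Nat.factorial (h * (d - h)) : ℚ) *
          Nat.choose (d - h + δ - 1) δ * Nat.choose h δ *
          (∏ i ∈ Finset.range h, (Nat.factorial i : ℚ)) *
          (∏ i ∈ Finset.range (d - h), (Nat.factorial i : ℚ)) /
          ((Nat.choose (h * (d - h)) δ : ℚ) * ∏ i ∈ Finset.range d, (Nat.factorial i : ℚ)) ∧
      (1 ≤ d - h →
        ∃ n : ℕ, 0 < n ∧
          ((Nat.factorial δ : ℚ) * Nat.factorial (h * (d - h) - δ) *
              Nat.choose (d - h + δ - 1) δ * Nat.choose h δ *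
              (∏ i ∈ Finset.range h, (Nat.factorial i : ℚ)) *
              (∏ i ∈ Finset.range (d - h), (Nat.factorial i : ℚ)) /
              ∏ i ∈ Finset.range d, (Nat.factorial i : ℚ)) = n) := by
  have hSd : (∏ i ∈ Finset.range d, (Nat.factorial i : ℚ)) ≠ 0 :=
    Finset.prod_ne_zero_iff.mpr fun i _ =>
      Nat.cast_ne_zero.mpr (Nat.factorial_ne_zero i)
  constructor
  · -- the identity
    by_cases hδN : δ ≤ h * (d - h)
    · have key : ((Nat.factorial (h * (d - h)) : ℚ)) =
          (Nat.choose (h * (d - h)) δ : ℚ) *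
            (Nat.factorial δ : ℚ) * (Nat.factorial (h * (d - h) - δ) : ℚ) := by
        exact_mod_cast (Nat.choose_mul_factorial_mul_factorial hδN).symm
      have hC : (Nat.choose (h * (d - h)) δ : ℚ) ≠ 0 :=
        Nat.cast_ne_zero.mpr (Nat.choose_pos hδN).ne'
      rw [div_eq_div_iff hSd (mul_ne_zero hC hSd), key]
      ring
    · push_neg at hδN
      have hdh : d - h = 0 := by
        rcases Nat.eq_zero_or_pos (d - h) with h0 | hpos
        · exact h0
        · have : h ≤ h * (d - h) := Nat.le_mul_of_pos_right h hpos
          omega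
      have hδ1 : 1 ≤ δ := by
        rw [hdh, Nat.mul_zero] at hδN
        omega
      have hz : (Nat.choose (d - h + δ - 1) δ : ℚ) = 0 := by
        rw [hdh]
        norm_cast
        exact Nat.choose_eq_zero_of_lt (by omega)
      rw [hz]
      simp
  · -- integrality
    intro hged
    obtain ⟨m', hm'⟩ : ∃ m', d - h = m' + 1 := ⟨d - h - 1, by omega⟩
    obtain ⟨s, hs⟩ : ∃ s, h = δ + s := ⟨h - δ, by omega⟩
    have hd : d = δ + s + (m' + 1) := by omega
    subst hs hd
    have e1 : δ + s + (m' + 1) - (δ + s) = m' + 1 := by omega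
    have e2 : (δ + s) * (m' + 1) - δ = m' * (δ + s) + s := by
      have : (δ + s) * (m' + 1) = m' * (δ + s) + s + δ := by ring
      omega
    have e3 : m' + 1 + δ - 1 = m' + δ := by omega
    rw [e1, e2, e3]
    set nn := m' * (δ + s) + s with hnn
    set V : ℕ := ∏ j ∈ Finset.range (δ + s), ∏ i ∈ Finset.range j,
      (xf m' δ j - xf m' δ i) with hV
    set P : ℕ := ∏ i ∈ Finset.range (δ + s), Nat.factorial (xf m' δ i) with hP
    have hPne : (P : ℚ) ≠ 0 := by
      rw [hP]
      push_cast
      exact Finset.prod_ne_zero_iff.mpr fun i _ =>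
        Nat.cast_ne_zero.mpr (Nat.factorial_ne_zero _)
    -- closed forms
    have hδs : δ ≤ δ + s := by omega
    have hδm : δ ≤ m' + δ := by omega
    have hC1 : (Nat.choose (m' + δ) δ : ℚ) =
        (Nat.factorial (m' + δ) : ℚ) /
          ((Nat.factorial δ : ℚ) * (Nat.factorial m' : ℚ)) := by
      rw [Nat.cast_choose ℚ hδm, show m' + δ - δ = m' from by omega]
    have hC2 : (Nat.choose (δ + s) δ : ℚ) =
        (Nat.factorial (δ + s) : ℚ) /
          ((Nat.factorial δ : ℚ) * (Nat.factorial s : ℚ)) := by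
      rw [Nat.cast_choose ℚ hδs, show δ + s - δ = s from by omega]
    have hVq : (V : ℚ) =
        ((∏ i ∈ Finset.range (δ + s), (Nat.factorial i : ℚ)) *
          (Nat.factorial (δ + s) : ℚ)) /
          ((Nat.factorial δ : ℚ) * (Nat.factorial s : ℚ)) := by
      rw [eq_div_iff (by positivity)]
      have hL := L1 m' δ s
      rw [prod_range_succ_factorial (δ + s), ← hV] at hL
      have hLq : (Nat.factorial δ : ℚ) * (Nat.factorial s : ℚ) * (V : ℚ) =
          (∏ i ∈ Finset.range (δ + s), (Nat.factorial i : ℚ)) *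
            (Nat.factorial (δ + s) : ℚ) := by exact_mod_cast hL
      linear_combination hLq
    have hPq : (P : ℚ) =
        ((Nat.factorial m' : ℚ) *
          ∏ k ∈ Finset.range (δ + s), (Nat.factorial (m' + 1 + k) : ℚ)) /
          (Nat.factorial (m' + δ) : ℚ) := by
      rw [eq_div_iff (by positivity)]
      have h2 := L2 m' δ s
      have hsplit : ∏ k ∈ Finset.range (δ + s + 1), Nat.factorial (m' + k)
          = (∏ k ∈ Finset.range (δ + s), Nat.factorial (m' + (k + 1))) *
              Nat.factorial (m' + 0) := Finset.prod_range_succ' _ _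
      have hconv : (∏ k ∈ Finset.range (δ + s), Nat.factorial (m' + (k + 1)))
          = ∏ k ∈ Finset.range (δ + s), Nat.factorial (m' + 1 + k) :=
        Finset.prod_congr rfl fun k _ => congrArg Nat.factorial (by omega)
      rw [hconv, Nat.add_zero] at hsplit
      rw [hsplit, ← hP] at h2
      have hq : (Nat.factorial (m' + δ) : ℚ) * (P : ℚ) =
          (∏ k ∈ Finset.range (δ + s), (Nat.factorial (m' + 1 + k) : ℚ)) *
            (Nat.factorial m' : ℚ) := by exact_mod_cast h2
      linear_combination hq
    have hSdq : (∏ i ∈ Finset.range (δ + s + (m' + 1)), (Nat.factorial i : ℚ)) =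
        (∏ i ∈ Finset.range (m' + 1), (Nat.factorial i : ℚ)) *
          ∏ k ∈ Finset.range (δ + s), (Nat.factorial (m' + 1 + k) : ℚ) := by
      rw [add_comm (δ + s) (m' + 1), Finset.prod_range_add]
    -- the rational value equals nn! * V / P
    have hSd' : (∏ i ∈ Finset.range (δ + s + (m' + 1)), (Nat.factorial i : ℚ)) ≠ 0 :=
      Finset.prod_ne_zero_iff.mpr fun i _ =>
        Nat.cast_ne_zero.mpr (Nat.factorial_ne_zero i)
    have hE : ((Nat.factorial δ : ℚ) * Nat.factorial nn *
          Nat.choose (m' + δ) δ * Nat.choose (δ + s) δ *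
          (∏ i ∈ Finset.range (δ + s), (Nat.factorial i : ℚ)) *
          (∏ i ∈ Finset.range (m' + 1), (Nat.factorial i : ℚ)) /
          ∏ i ∈ Finset.range (δ + s + (m' + 1)), (Nat.factorial i : ℚ)) =
        (Nat.factorial nn : ℚ) * (V : ℚ) / (P : ℚ) := by
      rw [hC1, hC2, hVq, hPq, hSdq]
      have hne1 : (Nat.factorial δ : ℚ) ≠ 0 := by positivity
      have hne2 : (Nat.factorial s : ℚ) ≠ 0 := by positivity
      have hne3 : (Nat.factorial m' : ℚ) ≠ 0 := by positivity
      have hne4 : (Nat.factorial (m' + δ) : ℚ) ≠ 0 := by positivity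
      have hne5 : (∏ i ∈ Finset.range (m' + 1), (Nat.factorial i : ℚ)) ≠ 0 :=
        Finset.prod_ne_zero_iff.mpr fun i _ =>
          Nat.cast_ne_zero.mpr (Nat.factorial_ne_zero i)
      have hne6 : (∏ k ∈ Finset.range (δ + s), (Nat.factorial (m' + 1 + k) : ℚ)) ≠ 0 :=
        Finset.prod_ne_zero_iff.mpr fun i _ =>
          Nat.cast_ne_zero.mpr (Nat.factorial_ne_zero _)
      field_simp
    obtain ⟨z, hz⟩ := int_exists m' δ s
    have hzE : (Nat.factorial nn : ℚ) * (V : ℚ) / (P : ℚ) = (z : ℚ) := by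
      rw [div_eq_iff hPne]
      exact_mod_cast hz
    -- positivity
    have hpos : (0 : ℚ) < (Nat.factorial δ : ℚ) * Nat.factorial nn *
          Nat.choose (m' + δ) δ * Nat.choose (δ + s) δ *
          (∏ i ∈ Finset.range (δ + s), (Nat.factorial i : ℚ)) *
          (∏ i ∈ Finset.range (m' + 1), (Nat.factorial i : ℚ)) /
          ∏ i ∈ Finset.range (δ + s + (m' + 1)), (Nat.factorial i : ℚ) := by
      apply div_pos
      · have p1 : (0 : ℚ) < Nat.factorial δ := by positivity
        have p2 : (0 : ℚ) < Nat.factorial nn := by positivity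
        have p3 : (0 : ℚ) < Nat.choose (m' + δ) δ :=
          Nat.cast_pos.mpr (Nat.choose_pos hδm)
        have p4 : (0 : ℚ) < Nat.choose (δ + s) δ :=
          Nat.cast_pos.mpr (Nat.choose_pos hδs)
        have p5 : (0 : ℚ) < ∏ i ∈ Finset.range (δ + s), (Nat.factorial i : ℚ) :=
          Finset.prod_pos fun i _ => by positivity
        have p6 : (0 : ℚ) < ∏ i ∈ Finset.range (m' + 1), (Nat.factorial i : ℚ) :=
          Finset.prod_pos fun i _ => by positivity
        positivity
      · exact Finset.prod_pos fun i _ => by positivity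
    rw [hE] at hpos ⊢
    rw [hzE] at hpos ⊢
    have hz0 : 0 < z := by exact_mod_cast hpos
    refine ⟨z.toNat, by omega, ?_⟩
    rw [← Int.cast_natCast (R := ℚ), Int.toNat_of_nonneg (by omega)]
end
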